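/- For every n ≥ 2, Alice has a winning strategy with n colours in the colouring game on K_2 □ K_n with Bob moving first; hence χ_{g_B}(H_{2,n}) = n. -/

import Mathlib

variable {V : Type*} [Fintype V] [DecidableEq V]

/-- A partial colouring with palette `Fin k` is proper if adjacent vertices never
receive the same colour. -/
def ProperPartial {k : ℕ} (G : SimpleGraph V) (c : V → Option (Fin k)) : Prop :=
  ∀ v w, G.Adj v w → ∀ x, c v = some x → c w ≠ some x

/-- The number of uncoloured vertices. -/
def uncoloured {k : ℕ} (c : V → Option (Fin k)) : ℕ :=
  (Finset.univ.filter fun v => c v = none).card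

/-- A single move: properly colour one previously uncoloured vertex. -/
def GMove {k : ℕ} (G : SimpleGraph V) (c c' : V → Option (Fin k)) : Prop :=
  ∃ v x, c v = none ∧ c' = Function.update c v (some x) ∧ ProperPartial G c'

/-- A sequence of exactly `t` single moves. -/
def GMoveSeq {k : ℕ} (G : SimpleGraph V) :
    ℕ → (V → Option (Fin k)) → (V → Option (Fin k)) → Prop
  | 0, c, c' => c' = c
  | t + 1, c, c' => ∃ c'', GMove G c c'' ∧ GMoveSeq G t c'' c'

/-- A turn of a player who must colour `min t u` vertices, where `u` is the current
number of uncoloured vertices. -/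
def GTurn {k : ℕ} (G : SimpleGraph V) (t : ℕ) (c c' : V → Option (Fin k)) : Prop :=
  GMoveSeq G (min t (uncoloured c)) c c'

/-- `AliceWins G k a b turn c`: Alice has a winning strategy in the `(a,b)`-colouring
game on `G` with `k` colours from position `c`, where `turn = true` means it is
Alice's turn and `turn = false` means it is Bob's turn. Alice wins exactly when the
whole graph eventually gets coloured. -/
inductive AliceWins (G : SimpleGraph V) (k a b : ℕ) :
    Bool → (V → Option (Fin k)) → Prop
  | done (turn : Bool) (c : V → Option (Fin k)) :
      uncoloured c = 0 → AliceWins G k a b turn c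
  | aliceTurn (c c' : V → Option (Fin k)) : 0 < uncoloured c → GTurn G a c c' →
      AliceWins G k a b false c' → AliceWins G k a b true c
  | bobTurn (c : V → Option (Fin k)) : 0 < uncoloured c →
      (∃ c', GTurn G b c c') →
      (∀ c', GTurn G b c c' → AliceWins G k a b true c') →
      AliceWins G k a b false c

/-- The everywhere-uncoloured position. -/
def emptyCol (V : Type*) (k : ℕ) : V → Option (Fin k) := fun _ => none

/-!
Alice keeps every column either uncoloured or coloured `(y, y + 1)` in `ℤ/nℤ`: when Bob colours
`(a, v)` with `x`, she colours the other vertex `(b, v)` with `x - a + b`. Row `1` is then row `0`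
shifted by `1`, so both rows are proper as soon as row `0` is, which Bob's proper move guarantees,
and each column is proper because `y ≠ y + 1` for `n ≥ 2`. Bob always has a legal move, in an
uncoloured column, since a row with an uncoloured vertex misses one of the `n` colours.

With `n - 1` colours every reachable position is still a proper partial colouring, so a win of
Alice would properly colour row `0`, a clique on `n` vertices.
-/

open SimpleGraph Function

section Game

variable {α : Type*} {k : ℕ} {G : SimpleGraph α}

theorem ProperPartial.update [DecidableEq α] {c : α → Option (Fin k)} (hc : ProperPartial G c)
    {u : α} {x : Fin k} (hx : ∀ w, G.Adj u w → c w ≠ some x) :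
    ProperPartial G (update c u (some x)) := by
  intro v w hvw y hv hw
  by_cases hvu : v = u <;> by_cases hwu : w = u
  · exact G.loopless.irrefl _ (hvu ▸ hwu ▸ hvw)
  · subst hvu
    rw [update_self, Option.some_inj] at hv
    rw [update_of_ne hwu] at hw
    exact hx w hvw (hv ▸ hw)
  · subst hwu
    rw [update_self, Option.some_inj] at hw
    rw [update_of_ne hvu] at hv
    exact hx v hvw.symm (hw ▸ hv)
  · rw [update_of_ne hvu] at hv
    rw [update_of_ne hwu] at hw
    exact hc v w hvw y hv hw

theorem properPartial_emptyCol : ProperPartial G (emptyCol α k) := by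
  simp [ProperPartial, emptyCol]

theorem uncoloured_eq_zero_iff [Fintype α] {c : α → Option (Fin k)} :
    uncoloured c = 0 ↔ ∀ v, c v ≠ none := by
  simp [uncoloured, Finset.filter_eq_empty_iff]

theorem uncoloured_pos_of_eq_none [Fintype α] {c : α → Option (Fin k)} {u : α} (hu : c u = none) :
    0 < uncoloured c :=
  Nat.pos_of_ne_zero fun h ↦ uncoloured_eq_zero_iff.mp h u hu

theorem uncoloured_update_lt [Fintype α] [DecidableEq α] {c : α → Option (Fin k)} {u : α}
    (hu : c u = none) (x : Fin k) : uncoloured (update c u (some x)) < uncoloured c := by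
  unfold uncoloured
  have : (Finset.univ.filter fun v ↦ update c u (some x) v = none) =
      (Finset.univ.filter fun v ↦ c v = none).erase u := by
    ext w
    rcases eq_or_ne w u with rfl | hwu <;> simp [update_of_ne, *]
  rw [this]
  exact Finset.card_erase_lt_of_mem (by simp [hu])

theorem GMove.properPartial [DecidableEq α] {c c' : α → Option (Fin k)} (h : GMove G c c') :
    ProperPartial G c' := by
  obtain ⟨_, _, _, _, hc'⟩ := h
  exact hc'

theorem GMove.uncoloured_pos [Fintype α] [DecidableEq α] {c c' : α → Option (Fin k)}
    (h : GMove G c c') : 0 < uncoloured c := by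
  obtain ⟨_, _, hu, _, _⟩ := h
  exact uncoloured_pos_of_eq_none hu

theorem GMoveSeq.properPartial [DecidableEq α] {c c' : α → Option (Fin k)} :
    ∀ {t : ℕ}, GMoveSeq G t c c' → ProperPartial G c → ProperPartial G c'
  | 0, h, hc => h ▸ hc
  | _ + 1, ⟨_, hmove, hseq⟩, _ => hseq.properPartial hmove.properPartial

theorem gTurn_one_iff [Fintype α] [DecidableEq α] {c c' : α → Option (Fin k)}
    (hc : 0 < uncoloured c) : GTurn G 1 c c' ↔ GMove G c c' := by
  simp [GTurn, min_eq_left (Nat.one_le_of_lt hc), GMoveSeq]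

theorem AliceWins.of_forall_gMove [Fintype α] [DecidableEq α] {a : ℕ} {c : α → Option (Fin k)}
    (hmove : ∃ c', GMove G c c') (h : ∀ c', GMove G c c' → AliceWins G k a 1 true c') :
    AliceWins G k a 1 false c := by
  obtain ⟨c', hc'⟩ := hmove
  have hc := hc'.uncoloured_pos
  exact .bobTurn c hc ⟨c', (gTurn_one_iff hc).mpr hc'⟩ fun c' h' ↦ h c' ((gTurn_one_iff hc).mp h')

theorem AliceWins.of_gMove [Fintype α] [DecidableEq α] {b : ℕ} {c c' : α → Option (Fin k)}
    (hmove : GMove G c c') (h : AliceWins G k 1 b false c') : AliceWins G k 1 b true c :=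
  .aliceTurn c c' hmove.uncoloured_pos ((gTurn_one_iff hmove.uncoloured_pos).mpr hmove) h

theorem properPartial_colorable [Fintype α] {c : α → Option (Fin k)} (hc : ProperPartial G c)
    (hfull : uncoloured c = 0) : G.Colorable k := by
  have hsome (v : α) : (c v).isSome :=
    Option.isSome_iff_ne_none.mpr (uncoloured_eq_zero_iff.mp hfull v)
  refine ⟨Coloring.mk (fun v ↦ (c v).get (hsome v)) fun {v w} hvw heq ↦ ?_⟩
  exact hc v w hvw _ (Option.some_get _).symm (by rw [heq, Option.some_get])

theorem AliceWins.colorable [Fintype α] [DecidableEq α] {a b : ℕ} {t : Bool}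
    {c : α → Option (Fin k)} (h : AliceWins G k a b t c) (hc : ProperPartial G c) :
    G.Colorable k := by
  induction h with
  | done _ _ hfull => exact properPartial_colorable hc hfull
  | aliceTurn _ _ _ hturn _ ih => exact ih (GMoveSeq.properPartial hturn hc)
  | bobTurn _ _ hturn _ ih =>
    obtain ⟨c', hc'⟩ := hturn
    exact ih c' hc' (GMoveSeq.properPartial hc' hc)

end Game

theorem exists_forall_ne_some_of_eq_none {β : Type*} [Finite β] {f : β → Option β} {v : β}
    (hv : f v = none) : ∃ x, ∀ w, f w ≠ some x := by
  by_contra! hall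
  choose g hg using hall
  have hg_inj : Injective g := fun x y hxy ↦ Option.some_injective _ (by rw [← hg x, hxy, hg y])
  obtain ⟨x, hx⟩ := Finite.surjective_of_injective hg_inj v
  simpa [hx, hv] using hg x

section RookGraph

open Fin.NatCast

variable {n : ℕ}

abbrev H₂ (n : ℕ) : SimpleGraph (Fin 2 × Fin n) :=
  (⊤ : SimpleGraph (Fin 2)) □ (⊤ : SimpleGraph (Fin n))

theorem H₂_adj {a b : Fin 2} {v w : Fin n} :
    (H₂ n).Adj (a, v) (b, w) ↔ a ≠ b ∧ v = w ∨ a = b ∧ v ≠ w := by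
  simp only [boxProd_adj, top_adj]
  tauto

theorem le_of_colorable_H₂ {k : ℕ} (h : (H₂ n).Colorable k) : n ≤ k := by
  have htop : (⊤ : SimpleGraph (Fin n)).Colorable k := h.of_hom (boxProdRight ⊤ ⊤ 0).toHom
  have hclique : (⊤ : SimpleGraph (Fin n)).IsClique (Finset.univ : Finset (Fin n)) := by
    rw [Finset.coe_univ]
    exact isClique_univ.mpr rfl
  simpa using hclique.card_le_of_colorable htop

variable [NeZero n]

def shiftedRows (f : Fin n → Option (Fin n)) : Fin 2 × Fin n → Option (Fin n) :=
  fun p ↦ (f p.2).map (· + (p.1.val : Fin n))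

@[simp]
theorem shiftedRows_apply (f : Fin n → Option (Fin n)) (a : Fin 2) (v : Fin n) :
    shiftedRows f (a, v) = (f v).map (· + (a.val : Fin n)) :=
  rfl

theorem natCast_fin_two_injective (hn : 2 ≤ n) : Injective fun a : Fin 2 ↦ (a.val : Fin n) := by
  intro a b hab
  have hval := congrArg Fin.val hab
  simp only [Fin.val_cast_of_lt (show (a : ℕ) < n by omega),
    Fin.val_cast_of_lt (show (b : ℕ) < n by omega)] at hval
  exact Fin.ext hval

theorem ProperPartial.shiftedRows (hn : 2 ≤ n) {f : Fin n → Option (Fin n)}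
    (hf : ProperPartial ⊤ f) : ProperPartial (H₂ n) (shiftedRows f) := by
  rintro ⟨a, v⟩ ⟨b, w⟩ hadj x hx hy
  simp only [shiftedRows_apply, Option.map_eq_some_iff] at hx hy
  obtain ⟨y, hfv, rfl⟩ := hx
  obtain ⟨z, hfw, hzy⟩ := hy
  rcases H₂_adj.mp hadj with ⟨hab, rfl⟩ | ⟨rfl, hvw⟩
  · rw [hfv, Option.some_inj] at hfw
    subst hfw
    exact hab (natCast_fin_two_injective hn (add_left_cancel hzy)).symm
  · exact hf v w hvw y hfv (add_right_cancel hzy ▸ hfw)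

theorem uncoloured_shiftedRows_eq_zero {f : Fin n → Option (Fin n)} (hf : uncoloured f = 0) :
    uncoloured (shiftedRows f) = 0 := by
  rw [uncoloured_eq_zero_iff] at hf ⊢
  rintro ⟨a, v⟩
  simpa using hf v

theorem shiftedRows_update {a b : Fin 2} (hab : a ≠ b) (f : Fin n → Option (Fin n)) (v y : Fin n) :
    shiftedRows (update f v (some y)) =
      update (update (shiftedRows f) (a, v) (some (y + (a.val : Fin n))))
        (b, v) (some (y + (b.val : Fin n))) := by
  ext ⟨a', w⟩ : 1
  by_cases hwv : w = v
  · subst hwv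
    obtain rfl | rfl : a' = a ∨ a' = b := by omega
    · simp [hab]
    · simp
  · simp [update_of_ne, hwv]

theorem exists_gMove_shiftedRows (hn : 2 ≤ n) {f : Fin n → Option (Fin n)}
    (hf : ProperPartial ⊤ f) {v : Fin n} (hv : f v = none) :
    ∃ c, GMove (H₂ n) (shiftedRows f) c := by
  obtain ⟨x, hx⟩ := exists_forall_ne_some_of_eq_none hv
  refine ⟨_, (0, v), x, by simp [hv], rfl, (hf.shiftedRows hn).update ?_⟩
  rintro ⟨b, w⟩ hadj hw
  rcases H₂_adj.mp hadj with ⟨-, rfl⟩ | ⟨rfl, -⟩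
  · simp [hv] at hw
  · exact hx w (by simpa using hw)

theorem exists_response_shiftedRows (hn : 2 ≤ n) {f : Fin n → Option (Fin n)}
    (hf : ProperPartial ⊤ f) {c : Fin 2 × Fin n → Option (Fin n)}
    (hbob : GMove (H₂ n) (shiftedRows f) c) :
    ∃ f', ProperPartial ⊤ f' ∧ uncoloured f' < uncoloured f ∧ GMove (H₂ n) c (shiftedRows f') := by
  obtain ⟨⟨a, v⟩, x, hav, rfl, hc⟩ := hbob
  have hv : f v = none := by simpa using hav
  set y := x - (a.val : Fin n)
  have hf' : ProperPartial ⊤ (update f v (some y)) := by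
    refine hf.update fun w hvw hw ↦ ?_
    refine hc (a, v) (a, w) (H₂_adj.mpr (.inr ⟨rfl, hvw⟩)) x (update_self ..) ?_
    simp [update_of_ne (show (a, w) ≠ (a, v) by simpa using Ne.symm hvw), hw, y]
  have hab : a ≠ a + 1 := by omega
  refine ⟨_, hf', uncoloured_update_lt hv y, (a + 1, v), y + ((a + 1).val : Fin n), ?_, ?_,
    hf'.shiftedRows hn⟩
  · simp [hv]
  · rw [shiftedRows_update hab, sub_add_cancel]

theorem aliceWins_shiftedRows (hn : 2 ≤ n) (f : Fin n → Option (Fin n)) (hf : ProperPartial ⊤ f) :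
    AliceWins (H₂ n) n 1 1 false (shiftedRows f) := by
  by_cases hfull : uncoloured f = 0
  · exact .done _ _ (uncoloured_shiftedRows_eq_zero hfull)
  obtain ⟨v, hv⟩ : ∃ v, f v = none := by simpa [uncoloured_eq_zero_iff] using hfull
  refine .of_forall_gMove (exists_gMove_shiftedRows hn hf hv) fun c hbob ↦ ?_
  obtain ⟨f', hf', hlt, halice⟩ := exists_response_shiftedRows hn hf hbob
  exact .of_gMove halice (aliceWins_shiftedRows hn f' hf')
termination_by uncoloured f

end RookGraph

/-- for every `n ≥ 2`, Alice has a winning strategy with `n` colours in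
the colouring game on `H_{2,n} = K₂ □ K_n` with Bob moving first, and none with
`n − 1` colours (since `χ(K₂ □ K_n) = n`); hence `χ_{g_B}(H_{2,n}) = n`. -/
theorem stmt15 (n : ℕ) (hn : 2 ≤ n) :
    AliceWins ((⊤ : SimpleGraph (Fin 2)).boxProd (⊤ : SimpleGraph (Fin n))) n 1 1 false
      (emptyCol (Fin 2 × Fin n) n) ∧
    ¬ AliceWins ((⊤ : SimpleGraph (Fin 2)).boxProd (⊤ : SimpleGraph (Fin n))) (n - 1) 1 1
      false (emptyCol (Fin 2 × Fin n) (n - 1)) := by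
  have : NeZero n := ⟨by omega⟩
  refine ⟨aliceWins_shiftedRows hn (emptyCol (Fin n) n) properPartial_emptyCol, fun h ↦ ?_⟩
  have := le_of_colorable_H₂ (h.colorable properPartial_emptyCol)
  omega
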